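/- In the parabolic model: let f : ℝ → ℝ be smooth with 1 − y²f(y) > 0 everywhere and define κ(y) = √(1 − y²f(y)) − 1. For c > 0, the closing condition integral ∫_{−c}^{c} c·(√(1−y²f(y)) − 1)/(y²·√(c²−y²)) dy vanishes for every c > 0 if and only if κ is odd (given κ continuous with κ(0)=0 and κ(y)/y² locally integrable). -/

import Mathlib

/-!
Write `√(1 - y² f y) - 1 = y² φ y` with the continuous `φ = -f / (√(1 - y² f) + 1)`, so that the
closing integral at `c` is `c ∫_{-c}^{c} φ y / √(c² - y²) dy`. If `κ` is odd, so is the integrand.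
Conversely, folding `[-c, c]` onto `[0, c]` shows that the even part `ψ y = φ y + φ (-y)` has
vanishing Abel transform `∫_0^c ψ y / √(c² - y²) dy`. Abel's inversion then kills `ψ`: multiply by
`c / √(R² - c²)`, integrate over `c ∈ (0, R)` and swap the integrals; since
`∫_y^R c / (√(c² - y²) √(R² - c²)) dc = π / 2` for every `0 ≤ y < R`, this gives
`(π / 2) ∫_0^R ψ = 0` for all `R > 0`, hence `ψ = 0` on `[0, ∞)`, i.e. `φ` and `κ` are odd.
-/

open MeasureTheory intervalIntegral Real Set

section Symmetric

variable {E : Type*} [NormedAddCommGroup E] [NormedSpace ℝ E] {f : ℝ → E}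

theorem intervalIntegral.integral_symm_eq_zero_of_odd (hf : ∀ x, f (-x) = -f x) (a : ℝ) :
    ∫ x in -a..a, f x = 0 := by
  have h := integral_comp_neg (f := f) (a := -a) (b := a)
  simp only [hf, integral_neg, neg_neg] at h
  have h2 : (2 : ℝ) • ∫ x in -a..a, f x = 0 := by
    rw [two_smul]; nth_rewrite 1 [← h]; exact neg_add_cancel _
  exact (smul_eq_zero.1 h2).resolve_left two_ne_zero

theorem intervalIntegral.integral_symm_eq_integral_add_comp_neg {a : ℝ} (ha : 0 ≤ a)
    (hf : IntervalIntegrable f volume (-a) a) :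
    ∫ x in -a..a, f x = ∫ x in 0..a, (f x + f (-x)) := by
  have hleft : IntervalIntegrable f volume (-a) 0 :=
    hf.mono_set (uIcc_subset_uIcc_left (by simp [uIcc_of_le, ha]))
  have hright : IntervalIntegrable f volume 0 a :=
    hf.mono_set (uIcc_subset_uIcc_right (by simp [uIcc_of_le, ha]))
  have hneg : IntervalIntegrable (fun x => f (-x)) volume 0 a := by
    simpa using (IntervalIntegrable.iff_comp_neg (f := f)).1 hleft.symm
  rw [← integral_add_adjacent_intervals hleft hright, integral_add hright hneg,
    integral_comp_neg, neg_zero, add_comm]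

end Symmetric

/-- Through `√` of a negative number being `0` and `x / 0 = 0`, the kernel vanishes for
`0 ≤ c ≤ y` and at `c = R`, so it can be integrated over the whole square `(0, R)²`. -/
noncomputable def abelKernel (R c y : ℝ) : ℝ := c / (√(c ^ 2 - y ^ 2) * √(R ^ 2 - c ^ 2))

theorem abelKernel_nonneg {R c : ℝ} (hc : 0 ≤ c) (y : ℝ) : 0 ≤ abelKernel R c y := by
  unfold abelKernel; positivity

theorem abelKernel_eq_zero_of_le {R c y : ℝ} (hc : 0 ≤ c) (hcy : c ≤ y) : abelKernel R c y = 0 := by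
  rw [abelKernel, sqrt_eq_zero'.2 (by nlinarith), zero_mul, div_zero]

noncomputable def abelKernelPrimitive (R y c : ℝ) : ℝ :=
  arcsin ((2 * c ^ 2 - y ^ 2 - R ^ 2) / (R ^ 2 - y ^ 2)) / 2

/-- Substituting `s = c ^ 2` turns the kernel into `ds / (2 √((s - y²)(R² - s)))`, a primitive of
which is half the arcsine of the affine map sending `[y², R²]` onto `[-1, 1]`. -/
theorem hasDerivAt_abelKernel_primitive {R c y : ℝ} (hy : 0 ≤ y) (hyc : y < c) (hcR : c < R) :
    HasDerivAt (abelKernelPrimitive R y) (abelKernel R c y) c := by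
  have hD : 0 < R ^ 2 - y ^ 2 := by nlinarith
  have hA : 0 < c ^ 2 - y ^ 2 := by nlinarith
  have hB : 0 < R ^ 2 - c ^ 2 := by nlinarith
  set u := (2 * c ^ 2 - y ^ 2 - R ^ 2) / (R ^ 2 - y ^ 2)
  set s := 2 * √(c ^ 2 - y ^ 2) * √(R ^ 2 - c ^ 2) / (R ^ 2 - y ^ 2)
  have hs : 0 < s := by positivity
  have hu : 1 - u ^ 2 = s ^ 2 := by
    simp only [u, s, div_pow, mul_pow, sq_sqrt hA.le, sq_sqrt hB.le]
    field_simp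
    ring
  have hu1 : u ≠ 1 := by rintro h; nlinarith [h ▸ hu]
  have hu2 : u ≠ -1 := by rintro h; nlinarith [h ▸ hu]
  have hinner : HasDerivAt (fun c => (2 * c ^ 2 - y ^ 2 - R ^ 2) / (R ^ 2 - y ^ 2))
      (4 * c / (R ^ 2 - y ^ 2)) c := by
    refine ((((hasDerivAt_pow 2 c).const_mul 2).sub_const (y ^ 2)).sub_const
      (R ^ 2)).div_const (R ^ 2 - y ^ 2) |>.congr_deriv ?_
    push_cast
    ring
  refine ((hasDerivAt_arcsin hu2 hu1).comp c hinner).div_const 2 |>.congr_deriv ?_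
  rw [hu, sqrt_sq hs.le, abelKernel]
  simp only [s]
  field_simp
  ring

theorem continuous_abelKernelPrimitive (R y : ℝ) : Continuous (abelKernelPrimitive R y) :=
  (continuous_arcsin.comp (by fun_prop)).div_const 2

theorem integrableOn_abelKernel {R y : ℝ} (hy : 0 ≤ y) :
    IntegrableOn (fun c => abelKernel R c y) (Ioc y R) :=
  integrableOn_deriv_of_nonneg (continuous_abelKernelPrimitive R y).continuousOn
    (fun _ hc => hasDerivAt_abelKernel_primitive hy hc.1 hc.2)
    (fun _ hc => abelKernel_nonneg (hy.trans hc.1.le) y)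

theorem integral_abelKernel {R y : ℝ} (hy : 0 ≤ y) (hyR : y < R) :
    ∫ c in y..R, abelKernel R c y = π / 2 := by
  have hD : R ^ 2 - y ^ 2 ≠ 0 := by nlinarith
  rw [integral_eq_sub_of_hasDerivAt_of_le hyR.le
    (continuous_abelKernelPrimitive R y).continuousOn
    (fun _ hc => hasDerivAt_abelKernel_primitive hy hc.1 hc.2)
    ((intervalIntegrable_iff_integrableOn_Ioc_of_le hyR.le).2 (integrableOn_abelKernel hy))]
  simp only [abelKernelPrimitive]
  rw [show (2 * R ^ 2 - y ^ 2 - R ^ 2) / (R ^ 2 - y ^ 2) = 1 by field_simp; ring,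
    show (2 * y ^ 2 - y ^ 2 - R ^ 2) / (R ^ 2 - y ^ 2) = -1 by field_simp; ring,
    arcsin_one, arcsin_neg_one]
  ring

theorem abelKernel_eq_zero_of_mem_Ioo_sdiff {R c y : ℝ} (hc : c ∈ Ioo 0 R \ Ioo y R) :
    abelKernel R c y = 0 :=
  abelKernel_eq_zero_of_le hc.1.1.le (not_lt.1 fun h => hc.2 ⟨h, hc.1.2⟩)

theorem integrableOn_Ioo_abelKernel {R y : ℝ} (hy : 0 ≤ y) :
    IntegrableOn (fun c => abelKernel R c y) (Ioo 0 R) :=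
  ((integrableOn_abelKernel hy).mono_set Ioo_subset_Ioc_self).of_forall_sdiff_eq_zero
    measurableSet_Ioo fun _ => abelKernel_eq_zero_of_mem_Ioo_sdiff

theorem setIntegral_Ioo_abelKernel {R y : ℝ} (hy : 0 ≤ y) (hyR : y < R) :
    ∫ c in Ioo 0 R, abelKernel R c y = π / 2 := by
  rw [setIntegral_eq_of_subset_of_forall_sdiff_eq_zero measurableSet_Ioo (Ioo_subset_Ioo_left hy)
    fun _ => abelKernel_eq_zero_of_mem_Ioo_sdiff, ← integral_Ioc_eq_integral_Ioo,
    ← integral_of_le hyR.le, integral_abelKernel hy hyR]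

theorem measurable_abelKernel (R : ℝ) : Measurable (Function.uncurry (abelKernel R)) := by
  unfold abelKernel; fun_prop

theorem integrable_abelKernel (R : ℝ) :
    Integrable (Function.uncurry (abelKernel R))
      ((volume.restrict (Ioo 0 R)).prod (volume.restrict (Ioo 0 R))) := by
  have hae : ∀ᵐ y ∂volume.restrict (Ioo 0 R), y ∈ Ioo 0 R := ae_restrict_mem measurableSet_Ioo
  rw [integrable_prod_iff' (measurable_abelKernel R).aestronglyMeasurable]
  refine ⟨hae.mono fun y hy => integrableOn_Ioo_abelKernel hy.1.le,
    (integrable_const (π / 2)).congr (hae.mono fun y hy => ?_)⟩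
  rw [← setIntegral_Ioo_abelKernel hy.1.le hy.2]
  exact setIntegral_congr_fun measurableSet_Ioo fun c hc =>
    (norm_of_nonneg (abelKernel_nonneg hc.1.le y)).symm

theorem setIntegral_mul_abelKernel (ψ : ℝ → ℝ) {R c : ℝ} (hc : c ∈ Ioo 0 R) :
    ∫ y in Ioo 0 R, ψ y * abelKernel R c y
      = c / √(R ^ 2 - c ^ 2) * ∫ y in 0..c, ψ y / √(c ^ 2 - y ^ 2) := by
  have hvanish : ∀ y ∈ Ioo 0 R \ Ioo 0 c, ψ y / √(c ^ 2 - y ^ 2) = 0 := fun y hy => by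
    have hcy : c ≤ y := not_lt.1 fun h => hy.2 ⟨hy.1.1, h⟩
    rw [sqrt_eq_zero'.2 (by nlinarith [hc.1]), div_zero]
  calc ∫ y in Ioo 0 R, ψ y * abelKernel R c y
      = c / √(R ^ 2 - c ^ 2) * ∫ y in Ioo 0 R, ψ y / √(c ^ 2 - y ^ 2) := by
        rw [← MeasureTheory.integral_const_mul]
        congr with y
        simp only [abelKernel]
        ring
    _ = c / √(R ^ 2 - c ^ 2) * ∫ y in 0..c, ψ y / √(c ^ 2 - y ^ 2) := by
        rw [setIntegral_eq_of_subset_of_forall_sdiff_eq_zero measurableSet_Ioo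
          (Ioo_subset_Ioo_right hc.2.le) hvanish, integral_of_le hc.1.le,
          integral_Ioc_eq_integral_Ioo]

theorem integral_eq_zero_of_integral_div_sqrt_sq_sub_sq_eq_zero {ψ : ℝ → ℝ} {R : ℝ} (hR : 0 ≤ R)
    (hψ : ContinuousOn ψ (Icc 0 R))
    (h : ∀ c ∈ Ioo 0 R, ∫ y in 0..c, ψ y / √(c ^ 2 - y ^ 2) = 0) :
    ∫ y in 0..R, ψ y = 0 := by
  set μ := volume.restrict (Ioo 0 R)
  have hae : ∀ᵐ y ∂μ, y ∈ Ioo 0 R := ae_restrict_mem measurableSet_Ioo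
  obtain ⟨M, hM⟩ := isCompact_Icc.exists_bound_of_continuousOn hψ
  have hbound : ∀ᵐ p ∂μ.prod μ, ‖ψ p.2‖ ≤ M := by
    rw [Measure.prod_restrict]
    exact ae_restrict_of_forall_mem (measurableSet_Ioo.prod measurableSet_Ioo) fun p hp =>
      hM p.2 (Ioo_subset_Icc_self hp.2)
  have hintegrable : Integrable (Function.uncurry fun c y => ψ y * abelKernel R c y) (μ.prod μ) :=
    (integrable_abelKernel R).bdd_mul
      ((hψ.mono Ioo_subset_Icc_self).aestronglyMeasurable measurableSet_Ioo).comp_snd hbound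
  have hsliceC : ∀ c ∈ Ioo 0 R, ∫ y, ψ y * abelKernel R c y ∂μ = 0 := fun c hc => by
    rw [setIntegral_mul_abelKernel ψ hc, h c hc, mul_zero]
  have hsliceY : ∀ y ∈ Ioo 0 R, ∫ c, ψ y * abelKernel R c y ∂μ = ψ y * (π / 2) := fun y hy => by
    rw [MeasureTheory.integral_const_mul, setIntegral_Ioo_abelKernel hy.1.le hy.2]
  have hswap := integral_integral_swap hintegrable
  rw [integral_congr_ae (hae.mono hsliceC), integral_congr_ae (hae.mono hsliceY),
    MeasureTheory.integral_zero, MeasureTheory.integral_mul_const] at hswap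
  rw [integral_of_le hR, integral_Ioc_eq_integral_Ioo]
  exact (mul_eq_zero.1 hswap.symm).resolve_right (by positivity)

theorem eqOn_zero_of_integral_div_sqrt_sq_sub_sq_eq_zero {ψ : ℝ → ℝ} (hψ : Continuous ψ)
    (h : ∀ c > 0, ∫ y in 0..c, ψ y / √(c ^ 2 - y ^ 2) = 0) : EqOn ψ 0 (Ici 0) := by
  have hpos : EqOn ψ 0 (Ioi 0) := fun t ht => by
    have hzero : (fun u => ∫ y in 0..u, ψ y) =ᶠ[nhds t] fun _ => 0 :=
      (eventually_gt_nhds ht).mono fun u hu =>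
        integral_eq_zero_of_integral_div_sqrt_sq_sub_sq_eq_zero hu.le hψ.continuousOn
          fun c hc => h c hc.1
    rw [← hψ.deriv_integral (a := 0) (b := t), hzero.deriv_eq, deriv_const, Pi.zero_apply]
  exact hpos.of_subset_closure hψ.continuousOn continuousOn_const Ioi_subset_Ici_self
    (closure_Ioi (0 : ℝ)).ge

theorem intervalIntegrable_one_div_sqrt_sq_sub_sq {c : ℝ} (hc : 0 < c) :
    IntervalIntegrable (fun y => 1 / √(c ^ 2 - y ^ 2)) volume (-c) c := by
  have hsqrt : ∀ y, √(c ^ 2 - y ^ 2) = c * √(1 - (y / c) ^ 2) := fun y => by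
    rw [← sqrt_sq hc.le, ← sqrt_mul (sq_nonneg c), sqrt_sq hc.le]
    congr 1
    field_simp
  refine (intervalIntegrable_iff_integrableOn_Ioc_of_le (by linarith)).2 <|
    integrableOn_deriv_of_nonneg (g := fun y => arcsin (y / c)) (by fun_prop)
      (fun y hy => ?_) (fun y _ => by positivity)
  have hy1 : y / c < 1 := (div_lt_one hc).2 hy.2
  have hy2 : -1 < y / c := (lt_div_iff₀ hc).2 (by linarith [hy.1])
  refine ((hasDerivAt_arcsin hy2.ne' hy1.ne).comp y ((hasDerivAt_id y).div_const c)).congr_deriv ?_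
  rw [hsqrt]
  field_simp

theorem intervalIntegrable_div_sqrt_sq_sub_sq {φ : ℝ → ℝ} {c : ℝ} (hc : 0 < c)
    (hφ : ContinuousOn φ (Icc (-c) c)) :
    IntervalIntegrable (fun y => φ y / √(c ^ 2 - y ^ 2)) volume (-c) c := by
  have hle : -c ≤ c := by linarith
  rw [intervalIntegrable_iff_integrableOn_Ioc_of_le hle] at *
  simpa only [mul_one_div] using ((intervalIntegrable_iff_integrableOn_Ioc_of_le hle).1
    (intervalIntegrable_one_div_sqrt_sq_sub_sq hc)).continuousOn_mul_of_subset hφ isCompact_Icc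
      measurableSet_Ioc Ioc_subset_Icc_self

theorem odd_of_integral_div_sqrt_sq_sub_sq_eq_zero {φ : ℝ → ℝ} (hφ : Continuous φ)
    (h : ∀ c > 0, ∫ y in -c..c, φ y / √(c ^ 2 - y ^ 2) = 0) (y : ℝ) : φ (-y) = -φ y := by
  have heven : ∀ t, 0 ≤ t → φ t + φ (-t) = 0 := fun t ht =>
    eqOn_zero_of_integral_div_sqrt_sq_sub_sq_eq_zero (ψ := fun y => φ y + φ (-y)) (by fun_prop)
      (fun c hc => by
        have hc' := h c hc
        rw [integral_symm_eq_integral_add_comp_neg hc.le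
          (intervalIntegrable_div_sqrt_sq_sub_sq hc hφ.continuousOn)] at hc'
        simpa only [neg_sq, add_div] using hc') ht
  rcases le_total 0 y with hy | hy
  · linarith [heven y hy]
  · have h' := heven (-y) (neg_nonneg.2 hy)
    rw [neg_neg] at h'
    linarith

theorem Real.sqrt_sub_one_eq_div {a : ℝ} (ha : 0 ≤ a) : √a - 1 = (a - 1) / (√a + 1) := by
  rw [eq_div_iff (by positivity)]
  nlinarith [sq_sqrt ha]

theorem stmt_11_general (f : ℝ → ℝ) (hf : Continuous f)
    (hpos : ∀ y, 1 - y ^ 2 * f y > 0)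
    (κ : ℝ → ℝ) (hκ : ∀ y, κ y = Real.sqrt (1 - y ^ 2 * f y) - 1) :
    (∀ c > (0:ℝ),
        (∫ y in (-c)..c, c * κ y / (y ^ 2 * Real.sqrt (c ^ 2 - y ^ 2))) = 0)
      ↔ (∀ y, κ (-y) = -κ y) := by
  set φ : ℝ → ℝ := fun y => -f y / (√(1 - y ^ 2 * f y) + 1)
  have hφ : Continuous φ := hf.neg.div (by fun_prop) fun y => by positivity
  have hκφ : ∀ y, κ y = y ^ 2 * φ y := fun y => by
    rw [hκ, sqrt_sub_one_eq_div (hpos y).le]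
    ring
  have hintegral : ∀ c, ∫ y in -c..c, c * κ y / (y ^ 2 * √(c ^ 2 - y ^ 2))
      = c * ∫ y in -c..c, φ y / √(c ^ 2 - y ^ 2) := fun c => by
    rw [← intervalIntegral.integral_const_mul]
    refine integral_congr_ae ((Measure.ae_ne volume 0).mono fun y hy _ => ?_)
    rw [hκφ, mul_left_comm, mul_div_mul_left _ _ (pow_ne_zero 2 hy), mul_div_assoc]
  constructor
  · intro h y
    have hφodd := odd_of_integral_div_sqrt_sq_sub_sq_eq_zero hφ
      (fun c hc => (mul_eq_zero.1 ((hintegral c).symm.trans (h c hc))).resolve_left hc.ne') y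
    rw [hκφ, hκφ, hφodd, neg_sq, mul_neg]
  · intro hodd c _
    exact integral_symm_eq_zero_of_odd (fun y => by rw [hodd, neg_sq]; ring) c

/-- Parabolic closing criterion: with `κ(y) = √(1−y²f(y)) − 1`, the closing
integrals all vanish iff `κ` is odd. -/
theorem stmt_11 (f : ℝ → ℝ) (hf : Continuous f)
    (hpos : ∀ y, 1 - y ^ 2 * f y > 0)
    (κ : ℝ → ℝ) (hκ : ∀ y, κ y = Real.sqrt (1 - y ^ 2 * f y) - 1)
    (hint : ∀ c > (0:ℝ), IntervalIntegrable
      (fun y => c * κ y / (y ^ 2 * Real.sqrt (c ^ 2 - y ^ 2))) volume (-c) c) :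
    (∀ c > (0:ℝ),
        (∫ y in (-c)..c, c * κ y / (y ^ 2 * Real.sqrt (c ^ 2 - y ^ 2))) = 0)
      ↔ (∀ y, κ (-y) = -κ y) :=
  stmt_11_general f hf hpos κ hκ
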